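/- arXiv:2210.06047 — 4 statements merged into one kernel-verified Lean document; each statement's English description precedes it below -/
import Mathlib

section
/- Every weak logic ⊢ is complete with respect to the class of bimatrices M(⊢): Γ ⊢ φ if and only if Γ ⊨c_{M(⊢)} φ. -/
inductive Fm (L : ℕ → Type) : Type
  | var : ℕ → Fm L
  | op : {n : ℕ} → L n → (Fin n → Fm L) → Fm L

variable {L : ℕ → Type}

def Fm.subst (σ : ℕ → Fm L) : Fm L → Fm L
  | .var p => σ p
  | .op f ts => .op f (fun i => (ts i).subst σ)

/-- An atomic substitution maps atoms to atoms. -/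
def Atomic (σ : ℕ → Fm L) : Prop := ∀ p, ∃ q, σ p = Fm.var q

abbrev Eqn (L : ℕ → Type) := Fm L × Fm L

def substEq (σ : ℕ → Fm L) (e : Eqn L) : Eqn L := (e.1.subst σ, e.2.subst σ)

/-- A logical bimatrix: an algebra with designated truth and core subsets. -/
structure Bimatrix (L : ℕ → Type) : Type 1 where
  carrier : Type
  interp : {n : ℕ} → L n → (Fin n → carrier) → carrier
  truth : Set carrier
  core : Set carrier

def Bimatrix.eval (M : Bimatrix L) (h : ℕ → M.carrier) : Fm L → M.carrier
  | .var p => h p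
  | .op f ts => M.interp f (fun i => M.eval h (ts i))

/-- The core consequence relation induced by a class of bimatrices. -/
def CoreMatCons (K : Set (Bimatrix L)) (Γ : Set (Fm L)) (φ : Fm L) : Prop :=
  ∀ M ∈ K, ∀ h : ℕ → M.carrier, (∀ p, h p ∈ M.core) →
    (∀ γ ∈ Γ, M.eval h γ ∈ M.truth) → M.eval h φ ∈ M.truth

def IsConsRel (Der : Set (Fm L) → Fm L → Prop) : Prop :=
  (∀ Γ φ, φ ∈ Γ → Der Γ φ) ∧
  (∀ (Γ Δ : Set (Fm L)) (ψ : Fm L), (∀ φ ∈ Δ, Der Γ φ) → Der Δ ψ → Der Γ ψ)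

def ClosedUnderAtomic (Der : Set (Fm L) → Fm L → Prop) : Prop :=
  ∀ σ : ℕ → Fm L, Atomic σ → ∀ Γ φ, Der Γ φ → Der (Fm.subst σ '' Γ) (Fm.subst σ φ)

def Finitary (Der : Set (Fm L) → Fm L → Prop) : Prop :=
  ∀ Γ φ, Der Γ φ → ∃ Δ : Set (Fm L), Δ ⊆ Γ ∧ Δ.Finite ∧ Der Δ φ

/-- A weak logic: a finitary consequence relation closed under atomic substitutions. -/
def IsWeakLogic (Der : Set (Fm L) → Fm L → Prop) : Prop :=
  IsConsRel Der ∧ ClosedUnderAtomic Der ∧ Finitary Der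

/-- The substitution replacing only the atom `p` by `ψ`. -/
def substOne (p : ℕ) (ψ : Fm L) : ℕ → Fm L := fun q => if q = p then ψ else Fm.var q

/-- The core of a weak logic: formulas that may be substituted for any single atom. -/
def CoreFm (Der : Set (Fm L) → Fm L → Prop) : Set (Fm L) :=
  {ψ | ∀ (Γ : Set (Fm L)) (φ : Fm L) (p : ℕ), Der Γ φ →
    Der (Fm.subst (substOne p ψ) '' Γ) (Fm.subst (substOne p ψ) φ)}

/-- The Lindenbaum bimatrix `M(⊢,Γ)`: domain the term algebra, truth set the
deductive closure of `Γ`, core the core of `⊢`. -/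
def LindMat (Der : Set (Fm L) → Fm L → Prop) (Γ : Set (Fm L)) : Bimatrix L :=
  ⟨Fm L, fun f ts => Fm.op f ts, {φ | Der Γ φ}, CoreFm Der⟩

/-!
A simultaneous substitution `σ` of core formulas into a finite set of formulas factors as a
renaming of the relevant atoms `p` to fresh atoms `p + N` (allowed since `⊢` is closed under
atomic substitutions), followed by one-atom substitutions `σ p / (p + N)`; as `N` lies above
every atom of the `σ p`, these do not interfere, and each one preserves `⊢` because `σ p` is in
the core. Finitarity extends this to arbitrary premise sets, which gives soundness. For
completeness, evaluate in `M(⊢, Γ)` under the identity assignment, which sends atoms into the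
core.
-/

def Fm.atoms : Fm L → Finset ℕ
  | .var p => {p}
  | .op _ ts => Finset.univ.biUnion fun i => (ts i).atoms

theorem Fm.subst_congr {σ τ : ℕ → Fm L} :
    ∀ φ : Fm L, (∀ p ∈ φ.atoms, σ p = τ p) → φ.subst σ = φ.subst τ
  | .var p, h => h p (Finset.mem_singleton_self p)
  | .op f ts, h => by
    simp only [Fm.subst, Fm.op.injEq, heq_eq_eq, true_and]
    funext i
    exact Fm.subst_congr (ts i) fun p hp =>
      h p (Finset.mem_biUnion.2 ⟨i, Finset.mem_univ i, hp⟩)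

@[simp]
theorem Fm.subst_var : ∀ φ : Fm L, φ.subst Fm.var = φ
  | .var _ => rfl
  | .op f ts => by
    simp only [Fm.subst, Fm.op.injEq, heq_eq_eq, true_and]
    funext i
    exact Fm.subst_var (ts i)

theorem Fm.subst_subst (σ τ : ℕ → Fm L) :
    ∀ φ : Fm L, (φ.subst σ).subst τ = φ.subst fun p => (σ p).subst τ
  | .var _ => rfl
  | .op f ts => by
    simp only [Fm.subst, Fm.op.injEq, heq_eq_eq, true_and]
    funext i
    exact Fm.subst_subst σ τ (ts i)

theorem Fm.subst_substOne_of_notMem {p : ℕ} {ψ φ : Fm L} (hp : p ∉ φ.atoms) :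
    φ.subst (substOne p ψ) = φ := by
  conv_rhs => rw [← φ.subst_var]
  refine φ.subst_congr fun q hq => ?_
  rw [substOne, if_neg (ne_of_mem_of_not_mem hq hp)]

theorem LindMat.eval_eq_subst {Der : Set (Fm L) → Fm L → Prop} {Δ : Set (Fm L)}
    (σ : ℕ → Fm L) : ∀ φ : Fm L, (LindMat Der Δ).eval σ φ = φ.subst σ
  | .var _ => rfl
  | .op f ts => by
    simp only [Bimatrix.eval, Fm.subst, LindMat, Fm.op.injEq, heq_eq_eq, true_and]
    funext i
    exact LindMat.eval_eq_subst σ (ts i)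

theorem LindMat.eval_mem_truth_iff {Der : Set (Fm L) → Fm L → Prop} {Δ : Set (Fm L)}
    (σ : ℕ → Fm L) (φ : Fm L) :
    (LindMat Der Δ).eval σ φ ∈ (LindMat Der Δ).truth ↔ Der Δ (φ.subst σ) :=
  Iff.of_eq (congrArg (Der Δ) (LindMat.eval_eq_subst σ φ))

section Core

variable {Der : Set (Fm L) → Fm L → Prop}

theorem IsConsRel.mono (hC : IsConsRel Der) {Γ Δ : Set (Fm L)} {φ : Fm L} (hΓΔ : Γ ⊆ Δ)
    (h : Der Γ φ) : Der Δ φ :=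
  hC.2 Δ Γ φ (fun γ hγ => hC.1 Δ γ (hΓΔ hγ)) h

theorem ClosedUnderAtomic.var_mem_coreFm (hA : ClosedUnderAtomic Der) (q : ℕ) :
    Fm.var q ∈ CoreFm Der := by
  intro Γ φ p h
  refine hA _ (fun r => ?_) Γ φ h
  by_cases hr : r = p
  · exact ⟨q, by simp [substOne, hr]⟩
  · exact ⟨r, by simp [substOne, hr]⟩

theorem subst_piecewise_of_mem_coreFm (S : Finset ℕ) (τ : ℕ → Fm L)
    (hcore : ∀ q ∈ S, τ q ∈ CoreFm Der)
    (hfresh : ∀ q ∈ S, ∀ a ∈ S, a ∉ (τ q).atoms)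
    {Γ : Set (Fm L)} {φ : Fm L} (h : Der Γ φ) :
    Der (Fm.subst (S.piecewise τ Fm.var) '' Γ) (φ.subst (S.piecewise τ Fm.var)) := by
  induction S using Finset.induction_on generalizing Γ φ with
  | empty => simpa using h
  | insert a S _ ih =>
    have hsplit : (fun q => (S.piecewise τ Fm.var q).subst (substOne a (τ a))) =
        (insert a S).piecewise τ Fm.var := by
      funext q
      by_cases hqS : q ∈ S
      · rw [Finset.piecewise_eq_of_mem _ _ _ hqS,
          Finset.piecewise_eq_of_mem _ _ _ (Finset.mem_insert_of_mem hqS),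
          Fm.subst_substOne_of_notMem
            (hfresh q (Finset.mem_insert_of_mem hqS) a (Finset.mem_insert_self a S))]
      · rw [Finset.piecewise_eq_of_notMem _ _ _ hqS, Finset.piecewise_insert,
          Function.update_apply]
        by_cases hqa : q = a <;> simp [Fm.subst, substOne, hqa, hqS]
    have hS := ih (fun q hq => hcore q (Finset.mem_insert_of_mem hq))
      (fun q hq b hb => hfresh q (Finset.mem_insert_of_mem hq) b (Finset.mem_insert_of_mem hb)) h
    have ha := hcore a (Finset.mem_insert_self a S) _ _ a hS
    rwa [Set.image_image, Fm.subst_subst, funext (Fm.subst_subst _ _), hsplit] at ha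

theorem ClosedUnderAtomic.subst_of_finite (hA : ClosedUnderAtomic Der) {σ : ℕ → Fm L}
    (hσ : ∀ p, σ p ∈ CoreFm Der) {Γ : Set (Fm L)} (hΓ : Γ.Finite) {φ : Fm L}
    (h : Der Γ φ) : Der (Fm.subst σ '' Γ) (φ.subst σ) := by
  set A := φ.atoms ∪ hΓ.toFinset.biUnion Fm.atoms
  obtain ⟨N, hN⟩ := (A.biUnion fun p => (σ p).atoms).exists_nat_subset_range
  set S := A.image (· + N)
  set π := S.piecewise (fun q => σ (q - N)) Fm.var
  have hfresh : ∀ q ∈ S, ∀ a ∈ S, a ∉ (σ (q - N)).atoms := by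
    simp only [S, Finset.mem_image]
    rintro _ ⟨p, hp, rfl⟩ _ ⟨r, -, rfl⟩ hr
    have := Finset.mem_range.1 (hN (Finset.mem_biUnion.2 ⟨p, hp, by simpa using hr⟩))
    omega
  have hrename : ∀ γ : Fm L, γ.atoms ⊆ A →
      (γ.subst fun p => .var (p + N)).subst π = γ.subst σ := by
    intro γ hγ
    rw [Fm.subst_subst]
    refine γ.subst_congr fun p hp => ?_
    simp only [Fm.subst, π]
    rw [Finset.piecewise_eq_of_mem _ _ _ (Finset.mem_image_of_mem _ (hγ hp)), Nat.add_sub_cancel]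
  have hatomic := hA (fun p => .var (p + N)) (fun p => ⟨p + N, rfl⟩) Γ φ h
  have hπ := subst_piecewise_of_mem_coreFm S _ (fun q _ => hσ (q - N)) hfresh hatomic
  rw [Set.image_image, hrename φ Finset.subset_union_left] at hπ
  refine (Set.image_congr fun γ hγ => ?_) ▸ hπ
  exact hrename γ <| Finset.subset_union_right.trans'
    (Finset.subset_biUnion_of_mem _ (hΓ.mem_toFinset.2 hγ))

theorem IsWeakLogic.subst_of_mem_coreFm (hW : IsWeakLogic Der) {σ : ℕ → Fm L}
    (hσ : ∀ p, σ p ∈ CoreFm Der) {Γ : Set (Fm L)} {φ : Fm L} (h : Der Γ φ) :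
    Der (Fm.subst σ '' Γ) (φ.subst σ) := by
  obtain ⟨Δ, hΔΓ, hΔ, hΔφ⟩ := hW.2.2 Γ φ h
  exact hW.1.mono (Set.image_mono hΔΓ) (hW.2.1.subst_of_finite hσ hΔ hΔφ)

end Core

/-- every weak logic is complete with respect to its class of
Lindenbaum bimatrices `M(⊢)`. -/
theorem weak_logic_complete_wrt_bimatrices (Der : Set (Fm L) → Fm L → Prop)
    (hW : IsWeakLogic Der) (Γ : Set (Fm L)) (φ : Fm L) :
    Der Γ φ ↔ CoreMatCons {M | ∃ Δ : Set (Fm L), M = LindMat Der Δ} Γ φ := by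
  constructor
  · rintro h _ ⟨Δ, rfl⟩ σ hσ hΓ
    refine (LindMat.eval_mem_truth_iff σ φ).2 (hW.1.2 Δ _ _ ?_ (hW.subst_of_mem_coreFm hσ h))
    rintro _ ⟨γ, hγ, rfl⟩
    exact (LindMat.eval_mem_truth_iff σ γ).1 (hΓ γ hγ)
  · intro h
    have := h (LindMat Der Γ) ⟨Γ, rfl⟩ Fm.var hW.2.1.var_mem_coreFm fun γ hγ => by
      rw [LindMat.eval_mem_truth_iff, Fm.subst_var]
      exact hW.1.1 Γ γ hγ
    rwa [LindMat.eval_mem_truth_iff, Fm.subst_var] at this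
end

section
/- The core consequence relation over a quasi-variety Q of expanded algebras with equationally defined core is compact: if every finite subset of a set T of quasi-equations has a model in Q under core semantics, then T has a model in Q under core semantics. -/
variable {L : ℕ → Type}

/-- An expanded algebra: an algebra with a designated core subset. -/
structure ExpAlg (L : ℕ → Type) : Type 1 where
  carrier : Type
  interp : {n : ℕ} → L n → (Fin n → carrier) → carrier
  core : Set carrier

def ExpAlg.eval (A : ExpAlg L) (h : ℕ → A.carrier) : Fm L → A.carrier
  | .var p => h p
  | .op f ts => A.interp f (fun i => A.eval h (ts i))

/-- A core assignment sends every atom into the core. -/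
def CoreAssign (A : ExpAlg L) (h : ℕ → A.carrier) : Prop := ∀ p, h p ∈ A.core

/-- `Σ(x,A)`: the set of elements satisfying all unary equations in `S`. -/
def SigmaSet (A : ExpAlg L) (S : Set (Eqn L)) : Set A.carrier :=
  {a | ∀ e ∈ S, A.eval (fun _ => a) e.1 = A.eval (fun _ => a) e.2}

/-- The core of `A` is defined by the set of equations `S`. -/
def HasSigmaCore (A : ExpAlg L) (S : Set (Eqn L)) : Prop := A.core = SigmaSet A S

/-- Validity of a quasi-equation (with finitely many premises) under core semantics. -/
def CoreValidQE (A : ExpAlg L) (ps : List (Eqn L)) (c : Eqn L) : Prop :=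
  ∀ h : ℕ → A.carrier, CoreAssign A h →
    (∀ e ∈ ps, A.eval h e.1 = A.eval h e.2) → A.eval h c.1 = A.eval h c.2

/-- Standard equational consequence over a class of expanded algebras. -/
def EqCons (Q : Set (ExpAlg L)) (Θ : Set (Eqn L)) (e : Eqn L) : Prop :=
  ∀ A ∈ Q, ∀ h : ℕ → A.carrier,
    (∀ d ∈ Θ, A.eval h d.1 = A.eval h d.2) → A.eval h e.1 = A.eval h e.2

/-- Core equational consequence: only core assignments are considered. -/
def CoreEqCons (Q : Set (ExpAlg L)) (Θ : Set (Eqn L)) (e : Eqn L) : Prop :=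
  ∀ A ∈ Q, ∀ h : ℕ → A.carrier, CoreAssign A h →
    (∀ d ∈ Θ, A.eval h d.1 = A.eval h d.2) → A.eval h e.1 = A.eval h e.2

def IsHom {A B : ExpAlg L} (g : A.carrier → B.carrier) : Prop :=
  ∀ {n : ℕ} (f : L n) (ts : Fin n → A.carrier),
    g (A.interp f ts) = B.interp f (fun i => g (ts i))

/-- A strict embedding: injective homomorphism reflecting and preserving the core. -/
def IsStrictEmb {A B : ExpAlg L} (g : A.carrier → B.carrier) : Prop :=
  IsHom g ∧ Function.Injective g ∧ ∀ x, x ∈ A.core ↔ g x ∈ B.core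

/-- `B` is (isomorphic to) the product of the family `A`, with core the product of cores. -/
def IsProductOf {ι : Type} (B : ExpAlg L) (A : ι → ExpAlg L) : Prop :=
  ∃ π : (∀ i, (A i).carrier) → B.carrier, Function.Bijective π ∧
    (∀ {n : ℕ} (f : L n) (ts : Fin n → ∀ i, (A i).carrier),
      π (fun i => (A i).interp f (fun k => ts k i)) = B.interp f (fun k => π (ts k))) ∧
    (∀ x, π x ∈ B.core ↔ ∀ i, x i ∈ (A i).core)

/-- `B` is (isomorphic to) the ultraproduct of the family `A` modulo `U`,
with core the ultraproduct of the cores. -/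
def IsUltraproductOf {ι : Type} (U : Ultrafilter ι) (B : ExpAlg L) (A : ι → ExpAlg L) : Prop :=
  ∃ π : (∀ i, (A i).carrier) → B.carrier, Function.Surjective π ∧
    (∀ x y, π x = π y ↔ {i | x i = y i} ∈ U) ∧
    (∀ {n : ℕ} (f : L n) (ts : Fin n → ∀ i, (A i).carrier),
      π (fun i => (A i).interp f (fun k => ts k i)) = B.interp f (fun k => π (ts k))) ∧
    (∀ x, π x ∈ B.core ↔ {i | x i ∈ (A i).core} ∈ U)

/-- A quasi-variety of expanded algebras: closed under I, S, P, P_U. -/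
def IsQuasivariety (Q : Set (ExpAlg L)) : Prop :=
  (∀ A B : ExpAlg L, B ∈ Q → (∃ g : A.carrier → B.carrier, IsStrictEmb g) → A ∈ Q) ∧
  (∀ (ι : Type) (A : ι → ExpAlg L) (B : ExpAlg L), (∀ i, A i ∈ Q) → IsProductOf B A → B ∈ Q) ∧
  (∀ (ι : Type) (U : Ultrafilter ι) (A : ι → ExpAlg L) (B : ExpAlg L),
    (∀ i, A i ∈ Q) → IsUltraproductOf U B A → B ∈ Q)


section CompactHelpers

variable {ι : Type}

private lemma ultra_mem_congr (U : Ultrafilter ι) {s t t' : Set ι} (hs : s ∈ U)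
    (h : ∀ i ∈ s, i ∈ t ↔ i ∈ t') : t ∈ U ↔ t' ∈ U := by
  constructor
  · intro ht
    exact Filter.mem_of_superset (Filter.inter_mem hs ht) fun i hi => (h i hi.1).1 hi.2
  · intro ht
    exact Filter.mem_of_superset (Filter.inter_mem hs ht) fun i hi => (h i hi.1).2 hi.2

def uSetoid (A : ι → ExpAlg L) (U : Ultrafilter ι) : Setoid (∀ i, (A i).carrier) where
  r x y := {i | x i = y i} ∈ U
  iseqv := by
    refine ⟨fun x => ?_, fun {x y} h => ?_, fun {x y z} h1 h2 => ?_⟩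
    · have : {i | x i = x i} = Set.univ := by ext i; simp
      rw [this]; exact Filter.univ_mem
    · have : {i | y i = x i} = {i | x i = y i} := by ext i; exact eq_comm
      rw [this]; exact h
    · exact Filter.mem_of_superset (Filter.inter_mem h1 h2) fun i hi => hi.1.trans hi.2

noncomputable def uAlg (A : ι → ExpAlg L) (U : Ultrafilter ι) : ExpAlg L where
  carrier := Quotient (uSetoid A U)
  interp f bs := Quotient.mk (uSetoid A U) fun i => (A i).interp f fun k => (bs k).out i
  core := {b | {i | b.out i ∈ (A i).core} ∈ U}

lemma uOut_agree (A : ι → ExpAlg L) (U : Ultrafilter ι) (x : ∀ i, (A i).carrier) :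
    {i | (Quotient.mk (uSetoid A U) x).out i = x i} ∈ U :=
  Quotient.exact (Quotient.out_eq (Quotient.mk (uSetoid A U) x))

lemma uAlg_interp (A : ι → ExpAlg L) (U : Ultrafilter ι) {n : ℕ} (f : L n)
    (ts : Fin n → ∀ i, (A i).carrier) :
    (uAlg A U).interp f (fun k => Quotient.mk (uSetoid A U) (ts k)) =
      Quotient.mk (uSetoid A U) (fun i => (A i).interp f fun k => ts k i) := by
  apply Quotient.sound
  show {i | _ = _} ∈ U
  have h : (⋂ k : Fin n, {i | (Quotient.mk (uSetoid A U) (ts k)).out i = ts k i}) ∈ U :=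
    Filter.iInter_mem.2 fun k => uOut_agree A U (ts k)
  refine Filter.mem_of_superset h fun i hi => ?_
  simp only [Set.mem_iInter, Set.mem_setOf_eq] at hi
  show (A i).interp f _ = (A i).interp f _
  congr 1
  funext k
  exact hi k

lemma uAlg_eval (A : ι → ExpAlg L) (U : Ultrafilter ι) (g : ℕ → ∀ i, (A i).carrier)
    (t : Fm L) :
    (uAlg A U).eval (fun p => Quotient.mk (uSetoid A U) (g p)) t =
      Quotient.mk (uSetoid A U) (fun i => (A i).eval (fun p => g p i) t) := by
  induction t with
  | var p => rfl
  | op f ts ih =>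
    show (uAlg A U).interp f (fun k => (uAlg A U).eval _ (ts k)) = _
    have : (fun k => (uAlg A U).eval (fun p => Quotient.mk (uSetoid A U) (g p)) (ts k)) =
        fun k => Quotient.mk (uSetoid A U) (fun i => (A i).eval (fun p => g p i) (ts k)) := by
      funext k; exact ih k
    rw [this, uAlg_interp]
    rfl

def Fm.vars : Fm L → Finset ℕ
  | .var p => {p}
  | .op _ ts => Finset.univ.biUnion fun k => (ts k).vars

lemma eval_congr_vars (A : ExpAlg L) {h h' : ℕ → A.carrier} (t : Fm L)
    (hh : ∀ p ∈ t.vars, h p = h' p) : A.eval h t = A.eval h' t := by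
  induction t with
  | var p => exact hh p (by simp [Fm.vars])
  | op f ts ih =>
    show A.interp f _ = A.interp f _
    congr 1
    funext k
    exact ih k fun p hp => hh p (by
      simp only [Fm.vars, Finset.mem_biUnion, Finset.mem_univ]
      exact ⟨k, trivial, hp⟩)

end CompactHelpers

/-- Compactness: over a quasi-variety of expanded algebras with
core uniformly defined by a finite set of equations, if every finite subset of a
set `T` of quasi-equations has a model in `Q` under core semantics, then `T` has
a model in `Q` under core semantics. -/
theorem core_semantics_compact (Q : Set (ExpAlg L)) (S : Set (Eqn L))
    (hQ : IsQuasivariety Q) (hSfin : S.Finite) (hcore : ∀ A ∈ Q, HasSigmaCore A S)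
    (T : Set (List (Eqn L) × Eqn L))
    (hfin : ∀ T₀ ⊆ T, T₀.Finite → ∃ A ∈ Q, ∀ q ∈ T₀, CoreValidQE A q.1 q.2) :
    ∃ A ∈ Q, ∀ q ∈ T, CoreValidQE A q.1 q.2 := by
  classical
  let ι : Type := {s : Set (List (Eqn L) × Eqn L) // s ⊆ T ∧ s.Finite}
  have hιm : ∀ i : ι, ∃ A ∈ Q, ∀ q ∈ i.1, CoreValidQE A q.1 q.2 :=
    fun i => hfin i.1 i.2.1 i.2.2
  choose A hAQ hAval using hιm
  haveI : Nonempty ι := ⟨⟨∅, by simp, Set.finite_empty⟩⟩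
  have hdir : Directed (· ≥ ·) (fun i : ι => Filter.principal {j : ι | i.1 ⊆ j.1}) := by
    intro i1 i2
    exact ⟨⟨i1.1 ∪ i2.1, Set.union_subset i1.2.1 i2.2.1, i1.2.2.union i2.2.2⟩,
      Filter.principal_mono.2 fun j hj e he => hj (Set.mem_union_left _ he),
      Filter.principal_mono.2 fun j hj e he => hj (Set.mem_union_right _ he)⟩
  haveI hFne : (⨅ i : ι, Filter.principal {j : ι | i.1 ⊆ j.1}).NeBot :=
    Filter.iInf_neBot_of_directed hdir fun i => by
      rw [Filter.principal_neBot_iff]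
      exact ⟨i, fun _ he => he⟩
  let U : Ultrafilter ι := Ultrafilter.of (⨅ i : ι, Filter.principal {j : ι | i.1 ⊆ j.1})
  have hUi : ∀ i : ι, {j : ι | i.1 ⊆ j.1} ∈ U :=
    fun i => Ultrafilter.of_le _ (Filter.mem_iInf_of_mem i (Filter.mem_principal_self _))
  set B := uAlg A U with hB
  have hBU : IsUltraproductOf U B A := by
    refine ⟨Quotient.mk (uSetoid A U), fun b => ⟨b.out, b.out_eq⟩, ?_, ?_, ?_⟩
    · intro x y
      exact Quotient.eq
    · intro n f ts
      exact (uAlg_interp A U f ts).symm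
    · intro x
      show {i | (Quotient.mk (uSetoid A U) x).out i ∈ (A i).core} ∈ U ↔ _
      exact ultra_mem_congr U (uOut_agree A U x) fun i hi => by
        simp only [Set.mem_setOf_eq] at hi ⊢
        rw [hi]
  have hBQ : B ∈ Q := hQ.2.2 ι U A B hAQ hBU
  refine ⟨B, hBQ, ?_⟩
  intro q hq h hch hprem
  set x : ℕ → ∀ i, (A i).carrier := fun p => (h p).out with hx
  have hh : h = fun p => Quotient.mk (uSetoid A U) (x p) :=
    funext fun p => (Quotient.out_eq _).symm
  -- each variable lands in the core almost everywhere
  have hcorep : ∀ p, {i | x p i ∈ (A i).core} ∈ U := fun p => hch p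
  -- for a formula, all of its variables land in cores a.e.
  have hcset : ∀ t : Fm L, {i | ∀ p ∈ t.vars, x p i ∈ (A i).core} ∈ U := by
    intro t
    have h1 : (⋂ p ∈ t.vars, {i | x p i ∈ (A i).core}) ∈ U :=
      (Filter.biInter_finset_mem t.vars).2 fun p _ => hcorep p
    refine Filter.mem_of_superset h1 fun i hi p hp => ?_
    exact Set.mem_iInter₂.1 hi p hp
  -- premises hold componentwise a.e.
  have hpremU : ∀ e ∈ q.1,
      {i | (A i).eval (fun p => x p i) e.1 = (A i).eval (fun p => x p i) e.2} ∈ U := by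
    intro e he
    have h2 := hprem e he
    rw [hh] at h2
    rw [show B.eval (fun p => Quotient.mk (uSetoid A U) (x p)) e.1 =
          Quotient.mk (uSetoid A U) (fun i => (A i).eval (fun p => x p i) e.1) from
        uAlg_eval A U x e.1,
      show B.eval (fun p => Quotient.mk (uSetoid A U) (x p)) e.2 =
          Quotient.mk (uSetoid A U) (fun i => (A i).eval (fun p => x p i) e.2) from
        uAlg_eval A U x e.2] at h2
    exact Quotient.exact h2
  -- the big good set
  have hqU : {j : ι | q ∈ j.1} ∈ U := by
    refine Filter.mem_of_superset
      (hUi ⟨{q}, Set.singleton_subset_iff.2 hq, Set.finite_singleton q⟩) fun j hj => ?_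
    exact hj rfl
  have hDe : ∀ e ∈ q.1,
      ({i | (A i).eval (fun p => x p i) e.1 = (A i).eval (fun p => x p i) e.2} ∩
        {i | ∀ p ∈ Fm.vars e.1, x p i ∈ (A i).core} ∩
        {i | ∀ p ∈ Fm.vars e.2, x p i ∈ (A i).core}) ∈ U := fun e he =>
    Filter.inter_mem (Filter.inter_mem (hpremU e he) (hcset e.1)) (hcset e.2)
  have hbig : ((⋂ e ∈ {e | e ∈ q.1},
      ({i | (A i).eval (fun p => x p i) e.1 = (A i).eval (fun p => x p i) e.2} ∩
        {i | ∀ p ∈ Fm.vars e.1, x p i ∈ (A i).core} ∩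
        {i | ∀ p ∈ Fm.vars e.2, x p i ∈ (A i).core}))) ∈ U :=
    (Filter.biInter_mem (List.finite_toSet q.1)).2 fun e he => hDe e he
  have hG : ({j : ι | q ∈ j.1} ∩ {i | x 0 i ∈ (A i).core} ∩
      {i | ∀ p ∈ Fm.vars q.2.1, x p i ∈ (A i).core} ∩
      {i | ∀ p ∈ Fm.vars q.2.2, x p i ∈ (A i).core} ∩
      (⋂ e ∈ {e | e ∈ q.1},
        ({i | (A i).eval (fun p => x p i) e.1 = (A i).eval (fun p => x p i) e.2} ∩
          {i | ∀ p ∈ Fm.vars e.1, x p i ∈ (A i).core} ∩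
          {i | ∀ p ∈ Fm.vars e.2, x p i ∈ (A i).core}))) ∈ U :=
    Filter.inter_mem (Filter.inter_mem (Filter.inter_mem
      (Filter.inter_mem hqU (hcorep 0)) (hcset q.2.1)) (hcset q.2.2)) hbig
  -- on the good set, the conclusion holds componentwise
  have hconc : {i | (A i).eval (fun p => x p i) q.2.1 = (A i).eval (fun p => x p i) q.2.2}
      ∈ U := by
    refine Filter.mem_of_superset hG fun i hi => ?_
    obtain ⟨⟨⟨⟨hiq, hi0⟩, hic1⟩, hic2⟩, hiprem⟩ := hi
    set hᵢ : ℕ → (A i).carrier :=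
      fun p => if x p i ∈ (A i).core then x p i else x 0 i with hhi
    have hcore : CoreAssign (A i) hᵢ := by
      intro p
      by_cases hp : x p i ∈ (A i).core
      · simp [hhi, hp]
      · simpa [hhi, hp] using hi0
    have hagree : ∀ t : Fm L, (∀ p ∈ Fm.vars t, x p i ∈ (A i).core) →
        (A i).eval hᵢ t = (A i).eval (fun p => x p i) t := by
      intro t ht
      exact eval_congr_vars (A i) t fun p hp => by simp [hhi, ht p hp]
    have hpremi : ∀ e ∈ q.1, (A i).eval hᵢ e.1 = (A i).eval hᵢ e.2 := by
      intro e he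
      have hie := Set.mem_iInter₂.1 hiprem e he
      obtain ⟨⟨hieq, hie1⟩, hie2⟩ := hie
      rw [hagree e.1 hie1, hagree e.2 hie2]
      exact hieq
    have := hAval i q hiq hᵢ hcore hpremi
    rw [hagree q.2.1 hic1, hagree q.2.2 hic2] at this
    exact this
  show B.eval h q.2.1 = B.eval h q.2.2
  rw [hh,
    show B.eval (fun p => Quotient.mk (uSetoid A U) (x p)) q.2.1 =
        Quotient.mk (uSetoid A U) (fun i => (A i).eval (fun p => x p i) q.2.1) from
      uAlg_eval A U x q.2.1,
    show B.eval (fun p => Quotient.mk (uSetoid A U) (x p)) q.2.2 =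
        Quotient.mk (uSetoid A U) (fun i => (A i).eval (fun p => x p i) q.2.2) from
      uAlg_eval A U x q.2.2]
  exact Quotient.sound hconc
end

section
/- For a weak logic ⊢, if the tuple (Q, Σ, τ, Δ) satisfies conditions (Weak-Alg1) and (Weak-Alg4), then it also satisfies (Weak-Alg2) and (Weak-Alg3); conversely, if it satisfies (Weak-Alg2) and (Weak-Alg3) then it satisfies (Weak-Alg1) and (Weak-Alg4). Hence to prove algebraizability it suffices to check either pair. -/
variable {L : ℕ → Type}

/-- The subset of `A` generated by the core. -/
inductive GenFrom (A : ExpAlg L) : A.carrier → Prop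
  | base (x : A.carrier) : x ∈ A.core → GenFrom A x
  | op {n : ℕ} (f : L n) (ts : Fin n → A.carrier) :
      (∀ i, GenFrom A (ts i)) → GenFrom A (A.interp f ts)

/-- An expanded algebra is core-generated if it is generated by its core. -/
def CoreGenerated (A : ExpAlg L) : Prop := ∀ x, GenFrom A x

/-- The quasi-variety generated by a class `K`. -/
def QGen (K : Set (ExpAlg L)) : Set (ExpAlg L) := ⋂₀ {Q | K ⊆ Q ∧ IsQuasivariety Q}

/-- A core-generated quasi-variety: generated by a class of core-generated expanded algebras. -/
def CoreGenQV (Q : Set (ExpAlg L)) : Prop :=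
  IsQuasivariety Q ∧ ∃ K : Set (ExpAlg L), (∀ A ∈ K, CoreGenerated A) ∧ Q = QGen K

def tauSet (τ : Fm L → Set (Eqn L)) (Γ : Set (Fm L)) : Set (Eqn L) := ⋃ φ ∈ Γ, τ φ

def deltaSet (Δ : Fm L → Fm L → Set (Fm L)) (Θ : Set (Eqn L)) : Set (Fm L) :=
  ⋃ e ∈ Θ, Δ e.1 e.2

/-- (Weak-Alg1): `Γ ⊢ φ` iff `τ[Γ] ⊨c_Q τ(φ)`. -/
def WAlg1 (Der : Set (Fm L) → Fm L → Prop) (Q : Set (ExpAlg L))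
    (τ : Fm L → Set (Eqn L)) : Prop :=
  ∀ Γ φ, Der Γ φ ↔ ∀ e ∈ τ φ, CoreEqCons Q (tauSet τ Γ) e

/-- (Weak-Alg2): `Δ[Θ] ⊢ Δ(η,δ)` iff `Θ ⊨c_Q η ≈ δ`. -/
def WAlg2 (Der : Set (Fm L) → Fm L → Prop) (Q : Set (ExpAlg L))
    (Δ : Fm L → Fm L → Set (Fm L)) : Prop :=
  ∀ (Θ : Set (Eqn L)) (η δ : Fm L),
    (∀ ψ ∈ Δ η δ, Der (deltaSet Δ Θ) ψ) ↔ CoreEqCons Q Θ (η, δ)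

/-- (Weak-Alg3): `φ ⊣⊢ Δ[τ(φ)]`. -/
def WAlg3 (Der : Set (Fm L) → Fm L → Prop) (τ : Fm L → Set (Eqn L))
    (Δ : Fm L → Fm L → Set (Fm L)) : Prop :=
  ∀ φ, (∀ ψ ∈ deltaSet Δ (τ φ), Der {φ} ψ) ∧ Der (deltaSet Δ (τ φ)) φ

/-- (Weak-Alg4): `η ≈ δ ≡c_Q τ[Δ(η,δ)]`. -/
def WAlg4 (Q : Set (ExpAlg L)) (τ : Fm L → Set (Eqn L))
    (Δ : Fm L → Fm L → Set (Fm L)) : Prop :=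
  ∀ η δ : Fm L, (∀ e ∈ tauSet τ (Δ η δ), CoreEqCons Q {(η, δ)} e) ∧
    CoreEqCons Q (tauSet τ (Δ η δ)) (η, δ)

/-- Algebraizability of a weak logic, witnessed by a core-generated quasi-variety `Q`
with core defined by the finite equation set `S`, and structural transformers `τ`, `Δ`. -/
structure Algebraizes (Der : Set (Fm L) → Fm L → Prop) (Q : Set (ExpAlg L))
    (S : Set (Eqn L)) (τ : Fm L → Set (Eqn L)) (Δ : Fm L → Fm L → Set (Fm L)) : Prop where
  coreGenQV : CoreGenQV Q
  sigmaFin : S.Finite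
  sigmaCore : ∀ A ∈ Q, HasSigmaCore A S
  tauStruct : ∀ (σ : ℕ → Fm L) (φ : Fm L), τ (Fm.subst σ φ) = substEq σ '' τ φ
  deltaStruct : ∀ (σ : ℕ → Fm L) (x y : Fm L),
    Δ (Fm.subst σ x) (Fm.subst σ y) = Fm.subst σ '' Δ x y
  alg1 : WAlg1 Der Q τ
  alg2 : WAlg2 Der Q Δ
  alg3 : WAlg3 Der τ Δ
  alg4 : WAlg4 Q τ Δ

lemma ceq_mem {Q : Set (ExpAlg L)} {Θ : Set (Eqn L)} {e : Eqn L} (he : e ∈ Θ) :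
    CoreEqCons Q Θ e := fun _ _ _ _ hd => hd e he

lemma ceq_mono {Q : Set (ExpAlg L)} {Θ Θ' : Set (Eqn L)} {e : Eqn L}
    (hs : Θ' ⊆ Θ) (h : CoreEqCons Q Θ' e) : CoreEqCons Q Θ e :=
  fun A hA h' hc hd => h A hA h' hc (fun d hd' => hd d (hs hd'))

lemma ceq_cut {Q : Set (ExpAlg L)} {Θ Θ' : Set (Eqn L)} {e : Eqn L}
    (h1 : ∀ d ∈ Θ', CoreEqCons Q Θ d) (h2 : CoreEqCons Q Θ' e) :
    CoreEqCons Q Θ e := fun A hA h hc hd =>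
  h2 A hA h hc (fun d hd' => h1 d hd' A hA h hc hd)

lemma der_mono {Der : Set (Fm L) → Fm L → Prop} (hC : IsConsRel Der)
    {Γ Γ' : Set (Fm L)} {ψ : Fm L} (hs : Γ' ⊆ Γ) (h : Der Γ' ψ) : Der Γ ψ :=
  hC.2 Γ Γ' ψ (fun φ hφ => hC.1 Γ φ (hs hφ)) h

lemma mem_tauSet {τ : Fm L → Set (Eqn L)} {Γ : Set (Fm L)} {e : Eqn L} :
    e ∈ tauSet τ Γ ↔ ∃ φ ∈ Γ, e ∈ τ φ := by simp [tauSet]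

lemma mem_deltaSet {Δ : Fm L → Fm L → Set (Fm L)} {Θ : Set (Eqn L)} {ψ : Fm L} :
    ψ ∈ deltaSet Δ Θ ↔ ∃ e ∈ Θ, ψ ∈ Δ e.1 e.2 := by simp [deltaSet]

lemma tauSet_sub {τ : Fm L → Set (Eqn L)} {φ : Fm L} {Γ : Set (Fm L)} (h : φ ∈ Γ) :
    τ φ ⊆ tauSet τ Γ := fun e he => mem_tauSet.2 ⟨φ, h, he⟩

lemma deltaSet_sub {Δ : Fm L → Fm L → Set (Fm L)} {e : Eqn L} {Θ : Set (Eqn L)} (h : e ∈ Θ) :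
    Δ e.1 e.2 ⊆ deltaSet Δ Θ := fun ψ hψ => mem_deltaSet.2 ⟨e, h, hψ⟩

lemma deltaSet_mono {Δ : Fm L → Fm L → Set (Fm L)} {Θ Θ' : Set (Eqn L)} (h : Θ' ⊆ Θ) :
    deltaSet Δ Θ' ⊆ deltaSet Δ Θ := fun ψ hψ => by
  obtain ⟨e, he, hψ'⟩ := mem_deltaSet.1 hψ
  exact mem_deltaSet.2 ⟨e, h he, hψ'⟩

lemma deltaSet_singleton {Δ : Fm L → Fm L → Set (Fm L)} {η δ : Fm L} :
    deltaSet Δ {(η, δ)} = Δ η δ := by simp [deltaSet]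

/-- for a weak logic and a core-generated quasi-variety with
`S`-defined core and structural transformers, (Weak-Alg1)+(Weak-Alg4) imply
(Weak-Alg2)+(Weak-Alg3), and conversely. -/
theorem alg_conditions_pairs_suffice (Der : Set (Fm L) → Fm L → Prop)
    (hW : IsWeakLogic Der) (Q : Set (ExpAlg L)) (S : Set (Eqn L))
    (τ : Fm L → Set (Eqn L)) (Δ : Fm L → Fm L → Set (Fm L))
    (hQ : CoreGenQV Q) (hSfin : S.Finite) (hcore : ∀ A ∈ Q, HasSigmaCore A S)
    (hτ : ∀ (σ : ℕ → Fm L) (φ : Fm L), τ (Fm.subst σ φ) = substEq σ '' τ φ)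
    (hΔ : ∀ (σ : ℕ → Fm L) (x y : Fm L),
      Δ (Fm.subst σ x) (Fm.subst σ y) = Fm.subst σ '' Δ x y) :
    ((WAlg1 Der Q τ ∧ WAlg4 Q τ Δ) → (WAlg2 Der Q Δ ∧ WAlg3 Der τ Δ)) ∧
    ((WAlg2 Der Q Δ ∧ WAlg3 Der τ Δ) → (WAlg1 Der Q τ ∧ WAlg4 Q τ Δ)) := by
  obtain ⟨hC, _, _⟩ := hW
  constructor
  · rintro ⟨h1, h4⟩
    constructor
    · -- WAlg2
      intro Θ η δ
      constructor
      · intro hψ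
        -- Θ ⊨ every element of τ[Δ[Θ]]
        have hbase : ∀ d ∈ tauSet τ (deltaSet Δ Θ), CoreEqCons Q Θ d := by
          intro d hd
          obtain ⟨ψ', hψ', hd'⟩ := mem_tauSet.1 hd
          obtain ⟨e, he, hψ''⟩ := mem_deltaSet.1 hψ'
          exact ceq_cut (fun d' hd'' => by cases hd''; exact ceq_mem he)
            ((h4 e.1 e.2).1 d (tauSet_sub hψ'' hd'))
        -- τ[Δ[Θ]] ⊨ every element of τ[Δηδ]
        have hmid : ∀ d ∈ tauSet τ (Δ η δ), CoreEqCons Q Θ d := by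
          intro d hd
          obtain ⟨ψ', hψ', hd'⟩ := mem_tauSet.1 hd
          exact ceq_cut hbase (((h1 (deltaSet Δ Θ) ψ').1 (hψ ψ' hψ')) d hd')
        exact ceq_cut hmid ((h4 η δ).2)
      · intro hΘ ψ hψmem
        refine (h1 (deltaSet Δ Θ) ψ).2 ?_
        intro e he
        -- τ[Δ[Θ]] ⊨ (η,δ), then {(η,δ)} ⊨ e gives result
        have hηδ : CoreEqCons Q (tauSet τ (deltaSet Δ Θ)) (η, δ) := by
          refine ceq_cut (fun d hd => ?_) hΘ
          refine ceq_mono (fun x hx => ?_) ((h4 d.1 d.2).2)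
          obtain ⟨ψ', hψ', hx'⟩ := mem_tauSet.1 hx
          exact mem_tauSet.2 ⟨ψ', deltaSet_sub hd hψ', hx'⟩
        have hsing : CoreEqCons Q {((η : Fm L), δ)} e :=
          (h4 η δ).1 e (tauSet_sub hψmem he)
        exact ceq_cut (fun d hd => by cases hd; exact hηδ) hsing
    · -- WAlg3
      intro φ
      constructor
      · intro ψ hψ
        obtain ⟨e, he, hψ'⟩ := mem_deltaSet.1 hψ
        refine (h1 {φ} ψ).2 ?_
        intro d hd
        have hsing : CoreEqCons Q {e} d := by
          have := (h4 e.1 e.2).1 d (tauSet_sub hψ' hd)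
          simpa using this
        refine ceq_cut (fun d' hd' => ?_) hsing
        cases hd'
        exact ceq_mem (mem_tauSet.2 ⟨φ, rfl, he⟩)
      · refine (h1 (deltaSet Δ (τ φ)) φ).2 ?_
        intro e he
        refine ceq_cut (fun d hd => ceq_mem ?_) ((h4 e.1 e.2).2)
        obtain ⟨ψ', hψ', hd'⟩ := mem_tauSet.1 hd
        exact mem_tauSet.2 ⟨ψ', deltaSet_sub he hψ', hd'⟩
  · rintro ⟨h2, h3⟩
    have halg1 : WAlg1 Der Q τ := by
      intro Γ φ
      constructor
      · intro hDer e he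
        -- Der (Δ[τ[Γ]]) φ
        have hφ' : Der (deltaSet Δ (tauSet τ Γ)) φ := by
          refine hC.2 _ _ _ (fun γ hγ => ?_) hDer
          refine hC.2 _ _ _ (fun χ hχ => ?_) ((h3 γ).2)
          refine hC.1 _ _ ?_
          obtain ⟨d, hd, hχ'⟩ := mem_deltaSet.1 hχ
          exact mem_deltaSet.2 ⟨d, tauSet_sub hγ hd, hχ'⟩
        have hδ : ∀ ψ ∈ Δ e.1 e.2, Der (deltaSet Δ (tauSet τ Γ)) ψ := by
          intro ψ hψ
          have : Der {φ} ψ := (h3 φ).1 ψ (deltaSet_sub he hψ)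
          exact hC.2 _ _ _ (fun χ hχ => by cases hχ; exact hφ') this
        have := (h2 (tauSet τ Γ) e.1 e.2).1 hδ
        simpa using this
      · intro hsem
        have hδ : ∀ ψ ∈ deltaSet Δ (τ φ), Der Γ ψ := by
          intro ψ hψ
          obtain ⟨e, he, hψ'⟩ := mem_deltaSet.1 hψ
          have hsem' : CoreEqCons Q (tauSet τ Γ) (e.1, e.2) := hsem e he
          have := (h2 (tauSet τ Γ) e.1 e.2).2 hsem' ψ hψ'
          -- Der (Δ[τ[Γ]]) ψ ; now cut: Γ derives every element of Δ[τ[Γ]]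
          refine hC.2 _ _ _ (fun χ hχ => ?_) this
          obtain ⟨d, hd, hχ'⟩ := mem_deltaSet.1 hχ
          obtain ⟨γ, hγ, hd'⟩ := mem_tauSet.1 hd
          have : Der {γ} χ := (h3 γ).1 χ (mem_deltaSet.2 ⟨d, hd', hχ'⟩)
          exact hC.2 _ _ _ (fun x hx => by cases hx; exact hC.1 _ _ hγ) this
        exact hC.2 _ _ _ hδ ((h3 φ).2)
    refine ⟨halg1, ?_⟩
    intro η δ
    constructor
    · intro e he
      obtain ⟨ψ, hψ, he'⟩ := mem_tauSet.1 he
      refine (h2 {((η : Fm L), δ)} e.1 e.2).1 ?_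
      intro χ hχ
      rw [deltaSet_singleton]
      have : Der {ψ} χ := (h3 ψ).1 χ (mem_deltaSet.2 ⟨e, he', hχ⟩)
      exact hC.2 _ _ _ (fun x hx => by cases hx; exact hC.1 _ _ hψ) this
    · refine (h2 (tauSet τ (Δ η δ)) η δ).1 ?_
      intro ψ hψ
      refine der_mono hC (fun χ hχ => ?_) ((h3 ψ).2)
      obtain ⟨d, hd, hχ'⟩ := mem_deltaSet.1 hχ
      exact mem_deltaSet.2 ⟨d, tauSet_sub hψ hd, hχ'⟩
end

section
/- A weak logic ⊢ is finitely represented by a finite set Λ of formulas if and only if the lattice of ⊢-theories equals the lattice of Schm(⊢)-theories containing AtSub[Λ]. -/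
variable {L : ℕ → Type}

/-- The schematic fragment of a weak logic. -/
def Schm (Der : Set (Fm L) → Fm L → Prop) : Set (Fm L) → Fm L → Prop :=
  fun Γ φ => ∀ σ : ℕ → Fm L, Der (Fm.subst σ '' Γ) (Fm.subst σ φ)

/-- Closure of a set of formulas under atomic substitutions. -/
def AtSub (Λ : Set (Fm L)) : Set (Fm L) :=
  {ψ | ∃ φ ∈ Λ, ∃ σ : ℕ → Fm L, Atomic σ ∧ ψ = Fm.subst σ φ}

/-- `⊢` is (finitely) represented by `Λ`. -/
def FinRep (Der : Set (Fm L) → Fm L → Prop) (Λ : Set (Fm L)) : Prop :=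
  ∀ Γ φ, Der Γ φ ↔ Schm Der (Γ ∪ AtSub Λ) φ

lemma subst_var_eq (φ : Fm L) : φ.subst Fm.var = φ := by
  induction φ with
  | var p => rfl
  | op f ts ih => simp [Fm.subst, ih]

lemma image_subst_var (Γ : Set (Fm L)) : Fm.subst Fm.var '' Γ = Γ := by
  ext ψ; simp [subst_var_eq]

/-- a weak logic `⊢` is finitely represented by a finite set `Λ`
iff the `⊢`-theories are exactly the `Schm(⊢)`-theories containing `AtSub[Λ]`. -/
theorem finrep_iff_theories (Der : Set (Fm L) → Fm L → Prop)
    (hW : IsWeakLogic Der) (Λ : Set (Fm L)) (hΛ : Λ.Finite) :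
    FinRep Der Λ ↔
      ∀ Γ : Set (Fm L),
        (∀ φ, Der Γ φ → φ ∈ Γ) ↔
          ((∀ φ, Schm Der Γ φ → φ ∈ Γ) ∧ AtSub Λ ⊆ Γ) := by
  obtain ⟨⟨hrefl, hcut⟩, _hatom, _hfin⟩ := hW
  constructor
  · intro hFR Γ
    constructor
    · intro hT
      refine ⟨?_, ?_⟩
      · intro φ hφ
        have := hφ Fm.var
        rw [image_subst_var, subst_var_eq] at this
        exact hT _ this
      · intro ψ hψ
        apply hT
        rw [hFR]
        intro σ
        exact hrefl _ _ ⟨ψ, Or.inr hψ, rfl⟩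
    · rintro ⟨hS, hsub⟩ φ hφ
      apply hS
      rw [hFR] at hφ
      rwa [Set.union_eq_self_of_subset_right hsub] at hφ
  · intro H Γ φ
    constructor
    · intro hD
      set T : Set (Fm L) := {ψ | Schm Der (Γ ∪ AtSub Λ) ψ} with hTdef
      have hTthy : ∀ ψ, Der T ψ → ψ ∈ T := by
        apply (H T).mpr
        constructor
        · intro ψ hψ σ
          refine hcut _ (Fm.subst σ '' T) _ ?_ (hψ σ)
          rintro χ ⟨τ, hτ, rfl⟩
          exact hτ σ
        · intro ψ hψ σ
          exact hrefl _ _ ⟨ψ, Or.inr hψ, rfl⟩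
      apply hTthy
      refine hcut T Γ _ ?_ hD
      intro γ hγ
      exact hrefl _ _ (show γ ∈ T from fun σ => hrefl _ _ ⟨γ, Or.inl hγ, rfl⟩)
    · intro hS
      have hΛder : ∀ ψ ∈ AtSub Λ, Der Γ ψ := by
        intro ψ hψ
        exact ((H {χ | Der Γ χ}).mp
          (fun χ hχ => hcut Γ {χ | Der Γ χ} χ (fun _ h => h) hχ)).2 hψ
      have h0 := hS Fm.var
      rw [image_subst_var, subst_var_eq] at h0
      exact hcut Γ (Γ ∪ AtSub Λ) φ (fun ψ h => h.elim (hrefl Γ ψ) (hΛder ψ)) h0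
end
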